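/- If a finitely generated abelian group G of rank n is contained in (covered by) a finite union of subgroups G_1,...,G_m, then at least one G_j has rank n. -/
import Mathlib

open Pointwise

/-- If a finitely generated abelian group `G` of rank `n` is covered by finitely many
subgroups `G_1, …, G_m`, then some `G_j` has rank `n`. -/
theorem rank_of_covering_subgroup (G : Type*) [AddCommGroup G] [AddGroup.FG G]
    (n : ℕ) (hG : Module.rank ℤ G = n) (m : ℕ) (H : Fin m → AddSubgroup G)
    (hcov : ∀ g : G, ∃ j, g ∈ H j) :
    ∃ j, Module.rank ℤ (H j) = n := by
  classical
  -- the subgroups cover G as cosets (with trivial translates)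
  have hcovers : ⋃ i ∈ (Finset.univ : Finset (Fin m)), (0 : G) +ᵥ (H i : Set G) = Set.univ := by
    ext g
    simp only [Set.mem_iUnion, Set.mem_univ, iff_true, zero_vadd, Finset.mem_univ, exists_prop,
      true_and]
    obtain ⟨j, hj⟩ := hcov g
    exact ⟨j, hj⟩
  obtain ⟨j, -, hfi⟩ := AddSubgroup.exists_finiteIndex_of_leftCoset_cover hcovers
  refine ⟨j, le_antisymm ?_ ?_⟩
  · -- rank of a subgroup is at most rank of G
    have : Module.rank ℤ (AddSubgroup.toIntSubmodule (H j)) ≤ Module.rank ℤ G :=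
      Submodule.rank_le _
    exact hG ▸ this
  · -- rank of G is at most rank of H j, via multiplication by the index
    set e : ℕ := (H j).index with he
    have he0 : (e : ℤ) ≠ 0 := by
      exact_mod_cast hfi.index_ne_zero
    have hmem : ∀ g : G, e • g ∈ H j := fun g => (H j).nsmul_index_mem g
    let φ : G →ₗ[ℤ] (H j) :=
      { toFun := fun g => ⟨e • g, hmem g⟩
        map_add' := fun x y => by simp [smul_add]
        map_smul' := fun c x => by
          ext
          show e • (c • x) = c • (e • x)
          exact smul_comm _ _ _ }
    have hker : Module.rank ℤ (LinearMap.ker φ) = 0 := by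
      rw [rank_eq_zero_iff]
      intro x
      refine ⟨(e : ℤ), he0, ?_⟩
      have hx : e • ((x : G) : G) = 0 :=
        congrArg Subtype.val (LinearMap.mem_ker.mp x.2)
      ext
      simpa using hx
    have hrn := φ.rank_range_add_rank_ker
    rw [hker, add_zero] at hrn
    calc (n : Cardinal) = Module.rank ℤ G := hG.symm
      _ = Module.rank ℤ (LinearMap.range φ) := hrn.symm
      _ ≤ Module.rank ℤ (H j) := Submodule.rank_le _
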